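/- arXiv:1702.07545 — 2 statements merged into one kernel-verified Lean document; each statement's English description precedes it below -/
import Mathlib

section
/- If Q is Hermitian positive semidefinite with diagonal entries p_i > 0 and off-diagonal entries satisfying |q_{ij}| = √(p_i p_j) for all i ≠ j, then Q has rank one and Q = w wᴴ where w_i = √(p_i) e^{i φ_i} with φ_i = arg(q_{i1}) (taking φ_1 = 0). -/
/-!
The vanishing of every 2 × 2 principal minor `Q₀₀ Qᵢᵢ - |Q₀ᵢ|²` puts the vector
`Q₀₀ eᵢ - Q₀ᵢ e₀` in the null cone of `Q`, hence (by positive semidefiniteness) in its kernel.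
This gives `Qⱼᵢ Q₀₀ = Qⱼ₀ Q₀ᵢ`, i.e. `Q` is the rank-one matrix built from its first column,
and writing `Qⱼ₀ = √(p₀ pⱼ) e^{i arg Qⱼ₀}` in polar form gives the vector `w`.
-/

open ComplexOrder

open Matrix

theorem Complex.eq_sqrt_mul_sqrt_mul_exp_arg_of_norm_eq {z : ℂ} {a b : ℝ} (ha : 0 ≤ a)
    (hz : ‖z‖ = Real.sqrt (a * b)) :
    z = Real.sqrt b * (Real.sqrt a * exp (I * arg z)) := by
  conv_lhs => rw [← norm_mul_exp_arg_mul_I z]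
  rw [hz, Real.sqrt_mul ha, mul_comm I]
  push_cast
  ring

namespace Matrix

theorem rank_pos_of_ne_zero {m n K : Type*} [Fintype n] [Field K] {A : Matrix m n K}
    (hA : A ≠ 0) : 0 < A.rank := by
  rw [rank, Module.finrank_pos_iff, Submodule.nontrivial_iff_ne_bot, ne_eq,
    LinearMap.range_eq_bot]
  contrapose! hA
  classical
  exact toLin'.injective (by rwa [LinearEquiv.map_zero, toLin'_apply'])

theorem PosSemidef.apply_mul_apply_eq_of_minor_eq_zero {ι 𝕜 : Type*} [Fintype ι]
    [DecidableEq ι] [RCLike 𝕜] {Q : Matrix ι ι 𝕜} (hQ : Q.PosSemidef) {a i : ι}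
    (h : Q a a * Q i i = Q a i * Q i a) (j : ι) :
    Q j i * Q a a = Q j a * Q a i := by
  set x : ι → 𝕜 := Q a a • Pi.single i 1 - Q a i • Pi.single a 1
  have hQx : Q *ᵥ x = fun k => Q a a * Q k i - Q a i * Q k a := by
    ext k
    simp [x, mulVec_sub, mulVec_smul]
  have hxQx : star x ⬝ᵥ Q *ᵥ x = 0 := by
    simp only [x, hQx, star_sub, star_smul, Pi.star_single, star_one, sub_dotProduct,
      smul_dotProduct, single_one_dotProduct, smul_eq_mul]
    rw [h]
    ring
  have hQxj := congrFun ((hQ.dotProduct_mulVec_zero_iff x).mp hxQx) j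
  simp only [hQx, Pi.zero_apply] at hQxj
  linear_combination hQxj

end Matrix

theorem stmt5 {n : ℕ} (Q : Matrix (Fin (n + 1)) (Fin (n + 1)) ℂ) (hQ : Q.PosSemidef)
    (p : Fin (n + 1) → ℝ) (hp : ∀ i, 0 < p i) (hdiag : ∀ i, Q i i = (p i : ℂ))
    (hoff : ∀ i j, i ≠ j → ‖Q i j‖ = Real.sqrt (p i * p j)) :
    Q.rank = 1 ∧
      Q = Matrix.vecMulVec
        (fun i => (Real.sqrt (p i) : ℂ) * Complex.exp (Complex.I * (Q i 0).arg))
        (star fun i => (Real.sqrt (p i) : ℂ) * Complex.exp (Complex.I * (Q i 0).arg)) := by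
  set w : Fin (n + 1) → ℂ := fun i => (Real.sqrt (p i) : ℂ) * Complex.exp (Complex.I * (Q i 0).arg)
  have hconj : ∀ i j, Q i j = star (Q j i) := fun i j => (hQ.1.apply i j).symm
  have hnorm : ∀ i, ‖Q i 0‖ = Real.sqrt (p i * p 0) := by
    intro i
    rcases eq_or_ne i 0 with rfl | hi
    · rw [hdiag, Complex.norm_real, Real.norm_of_nonneg (hp 0).le, Real.sqrt_mul_self (hp 0).le]
    · exact hoff i 0 hi
  have hminor : ∀ i, Q 0 0 * Q i i = Q 0 i * Q i 0 := by
    intro i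
    rw [hconj 0 i, hdiag, hdiag, Complex.star_def, Complex.conj_mul', hnorm, ← Complex.ofReal_pow,
      Real.sq_sqrt (mul_nonneg (hp i).le (hp 0).le)]
    push_cast
    ring
  have hcol : ∀ k, Q k 0 = Real.sqrt (p 0) * w k := fun k =>
    Complex.eq_sqrt_mul_sqrt_mul_exp_arg_of_norm_eq (hp k).le (hnorm k)
  have hp0 : (p 0 : ℂ) ≠ 0 := Complex.ofReal_ne_zero.mpr (hp 0).ne'
  have hsq : (Real.sqrt (p 0) : ℂ) ^ 2 = p 0 := by
    rw [← Complex.ofReal_pow, Real.sq_sqrt (hp 0).le]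
  have hQw : Q = vecMulVec w (star w) := by
    ext j i
    refine mul_right_cancel₀ hp0 ?_
    rw [← hdiag, hQ.apply_mul_apply_eq_of_minor_eq_zero (hminor i), hconj 0 i, hcol, hcol,
      hdiag, vecMulVec_apply, Pi.star_apply, star_mul', Complex.star_def, Complex.conj_ofReal]
    linear_combination (w j * starRingEnd ℂ (w i)) * hsq
  have hQ0 : Q ≠ 0 := fun h => hp0 (by simpa [h] using (hdiag 0).symm)
  exact ⟨le_antisymm (hQw ▸ rank_vecMulVec_le w (star w)) (rank_pos_of_ne_zero hQ0), hQw⟩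
end

section
/- Over the feasible set {Q Hermitian, Q ⪰ 0, Q_{ii} ≤ p_i for all i}, any maximizer Q* of tr(H Q Hᴴ) with H having no zero column satisfies Q*_{ii} = p_i for all i; equivalently, if Q_{jj} < p_j for some j with (HᴴH)_{jj} > 0, then Q is not a maximizer. -/
open ComplexOrder
open Matrix

/-!
Raising the deficient diagonal entry `Q j j` up to `p j` by adding the positive semidefinite
rank-one matrix `ε • eⱼ eⱼᴴ` keeps `Q` feasible and increases the objective by
`ε (Hᴴ H) j j > 0`, since `tr (H eⱼ eⱼᴴ Hᴴ) = (Hᴴ H) j j`.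
-/

namespace Matrix

variable {m n R : Type*} [DecidableEq n]

lemma PosSemidef.single_same [CommRing R] [PartialOrder R] [StarRing R]
    [StarOrderedRing R] (i : n) {c : R} (hc : 0 ≤ c) : (single i i c).PosSemidef := by
  rw [← diagonal_single]
  exact .diagonal (Pi.single_nonneg.2 hc)

lemma trace_mul_single_mul [Fintype m] [Fintype n] [CommSemiring R]
    (A : Matrix m n R) (B : Matrix n m R) (j : n) (c : R) :
    trace (A * single j j c * B) = c * (B * A) j j := by
  rw [trace_mul_cycle, trace_mul_single, op_smul_eq_mul, mul_comm]

end Matrix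

theorem stmt10_general {K N : ℕ} (H : Matrix (Fin K) (Fin N) ℂ) (p : Fin N → ℝ)
    (hH : ∀ j, 0 < ((Hᴴ * H) j j).re)
    (Q : Matrix (Fin N) (Fin N) ℂ) (hQ : Q.PosSemidef) (hfeas : ∀ i, (Q i i).re ≤ p i)
    (j : Fin N) (hj : (Q j j).re < p j) :
    ∃ Q' : Matrix (Fin N) (Fin N) ℂ, Q'.PosSemidef ∧ (∀ i, (Q' i i).re ≤ p i) ∧
      ((H * Q * Hᴴ).trace).re < ((H * Q' * Hᴴ).trace).re := by
  set ε : ℝ := p j - (Q j j).re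
  have hε : 0 < ε := sub_pos.2 hj
  refine ⟨Q + single j j (ε : ℂ),
    hQ.add (PosSemidef.single_same j (Complex.zero_le_real.2 hε.le)), fun i => ?_, ?_⟩
  · rcases eq_or_ne i j with rfl | hij
    · simp [ε]
    · simpa [single_apply_of_row_ne hij.symm] using hfeas i
  · have hgain : 0 < (trace (H * single j j (ε : ℂ) * Hᴴ)).re := by
      rw [trace_mul_single_mul, Complex.re_ofReal_mul]
      exact mul_pos hε (hH j)
    rw [Matrix.mul_add, Matrix.add_mul, trace_add, Complex.add_re]
    linarith

theorem stmt10 {K N : ℕ} (H : Matrix (Fin K) (Fin N) ℂ) (p : Fin N → ℝ) (hp : ∀ i, 0 < p i)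
    (hH : ∀ j, 0 < ((Hᴴ * H) j j).re)
    (Q : Matrix (Fin N) (Fin N) ℂ) (hQ : Q.PosSemidef) (hfeas : ∀ i, (Q i i).re ≤ p i)
    (j : Fin N) (hj : (Q j j).re < p j) :
    ∃ Q' : Matrix (Fin N) (Fin N) ℂ, Q'.PosSemidef ∧ (∀ i, (Q' i i).re ≤ p i) ∧
      ((H * Q * Hᴴ).trace).re < ((H * Q' * Hᴴ).trace).re :=
  stmt10_general H p hH Q hQ hfeas j hj
end
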